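/- Let G = (V,E) be a finite simple undirected graph and let S, T ⊆ V be disjoint nonempty vertex sets admitting an S–T separator. Let N(C*) be the farthest minimum S–T separator. Then for every important S–T separator N(C), it holds that C* ⊆ C. -/

import Mathlib

open scoped Classical

variable {V : Type*} [Fintype V] [DecidableEq V]

/-- The graph `G − X`: the graph obtained from `G` by deleting the vertices of `X`
(encoded on the same vertex type: vertices of `X` become isolated). -/
def removeVerts (G : SimpleGraph V) (X : Set V) : SimpleGraph V where
  Adj u v := G.Adj u v ∧ u ∉ X ∧ v ∉ X
  symm := by constructor; rintro u v ⟨h, hu, hv⟩; exact ⟨h.symm, hv, hu⟩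
  loopless := by constructor; rintro v ⟨h, -, -⟩; exact h.ne rfl

/-- The open neighborhood `N(C)` of a vertex set `C`. -/
def nbhd (G : SimpleGraph V) (C : Set V) : Set V :=
  {v | v ∉ C ∧ ∃ u ∈ C, G.Adj u v}

/-- The set of vertices connected to `S` in `G − X`. -/
def reachSet (G : SimpleGraph V) (X S : Set V) : Set V :=
  {v | ∃ s ∈ S, (removeVerts G X).Reachable s v}

/-- `X` is an `S`–`T` separator: `X ⊆ V ∖ (S ∪ T)` and no path of `G − X` connects `S` to `T`. -/
def IsSeparator (G : SimpleGraph V) (S T X : Set V) : Prop :=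
  Disjoint X (S ∪ T) ∧ ∀ s ∈ S, ∀ t ∈ T, ¬ (removeVerts G X).Reachable s t

/-- A minimal `S`–`T` separator. -/
def IsMinimalSep (G : SimpleGraph V) (S T X : Set V) : Prop :=
  IsSeparator G S T X ∧ ∀ X' ⊂ X, ¬ IsSeparator G S T X'

/-- A minimum `S`–`T` separator. -/
def IsMinimumSep (G : SimpleGraph V) (S T X : Set V) : Prop :=
  IsSeparator G S T X ∧ ∀ X', IsSeparator G S T X' → X.ncard ≤ X'.ncard

/-- A separator `X` is farthest (w.r.t. `S`) if every `S`–`T` separator whose reachable set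
strictly contains that of `X` is strictly larger. -/
def IsFarthest (G : SimpleGraph V) (S T X : Set V) : Prop :=
  ∀ X', IsSeparator G S T X' → reachSet G X S ⊂ reachSet G X' S → X.ncard < X'.ncard

/-- An important `S`–`T` separator. -/
def IsImportantSep (G : SimpleGraph V) (S T X : Set V) : Prop :=
  IsMinimalSep G S T X ∧ ∀ X', IsMinimalSep G S T X' →
    reachSet G X S ⊂ reachSet G X' S → X.ncard < X'.ncard

-- monotonicity
lemma reach_mono (G : SimpleGraph V) {X X' : Set V} (S : Set V) (h : X' ⊆ X) :
    reachSet G X S ⊆ reachSet G X' S := by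
  rintro v ⟨s, hs, hr⟩
  refine ⟨s, hs, hr.mono ?_⟩
  rintro a b ⟨hab, ha, hb⟩
  exact ⟨hab, fun h' => ha (h h'), fun h' => hb (h h')⟩

lemma subset_reach (G : SimpleGraph V) (X S : Set V) : S ⊆ reachSet G X S :=
  fun s hs => ⟨s, hs, SimpleGraph.Reachable.refl s⟩

lemma walk_end_not_mem {G : SimpleGraph V} {X : Set V} :
    ∀ {a b : V}, (removeVerts G X).Walk a b → b ∉ X ∨ b = a
  | _, _, .nil => .inr rfl
  | _, _, .cons h q => match walk_end_not_mem q with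
      | .inl hb => .inl hb
      | .inr rfl => .inl h.2.2

lemma reach_not_mem {G : SimpleGraph V} {X S : Set V} (hdis : Disjoint X S) :
    ∀ v ∈ reachSet G X S, v ∉ X := by
  rintro v ⟨s, hs, hr⟩
  obtain ⟨p⟩ := hr
  rcases walk_end_not_mem p with h | rfl
  · exact h
  · exact fun hv => hdis.ne_of_mem hv hs rfl

lemma nbhd_reach_subset {G : SimpleGraph V} {S T X : Set V} (hsep : IsSeparator G S T X) :
    nbhd G (reachSet G X S) ⊆ X := by
  rintro v ⟨hv, u, hu, hadj⟩
  by_contra hvX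
  have huX : u ∉ X := reach_not_mem (hsep.1.mono_right Set.subset_union_left) u hu
  obtain ⟨s, hs, hr⟩ := hu
  exact hv ⟨s, hs, hr.trans (SimpleGraph.Adj.reachable ⟨hadj, huX, hvX⟩)⟩

lemma walk_stays {G : SimpleGraph V} {C : Set V} {a b : V}
    (ha : a ∈ C) (p : (removeVerts G (nbhd G C)).Walk a b) : b ∈ C := by
  induction p with
  | nil => exact ha
  | @cons a u b h q ih =>
      obtain ⟨hadj, -, hu⟩ := h
      by_cases huC : u ∈ C
      · exact ih huC
      · exact absurd ⟨huC, a, ha, hadj⟩ hu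

lemma nbhd_isSeparator {G : SimpleGraph V} {S T : Set V} (C : Set V)
    (hSC : S ⊆ C) (hTC : Disjoint T C) (hTN : Disjoint T (nbhd G C)) :
    IsSeparator G S T (nbhd G C) := by
  constructor
  · rw [Set.disjoint_union_right]
    constructor
    · exact Set.disjoint_left.mpr (fun v hv hvS => hv.1 (hSC hvS))
    · exact hTN.symm
  · intro s hs t ht hr
    obtain ⟨p⟩ := hr
    exact hTC.ne_of_mem ht (walk_stays (hSC hs) p) rfl

lemma reach_subset_of_avoid {G : SimpleGraph V} {X X' S : Set V}
    (hd : ∀ v ∈ reachSet G X S, v ∉ X') :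
    reachSet G X S ⊆ reachSet G X' S := by
  have key : ∀ {a b : V}, a ∈ reachSet G X S → (removeVerts G X).Walk a b →
      (removeVerts G X').Reachable a b := by
    intro a b ha p
    induction p with
    | nil => exact SimpleGraph.Reachable.refl _
    | @cons a u b h q ih =>
        have hu : u ∈ reachSet G X S := by
          obtain ⟨s, hs, hr⟩ := ha
          exact ⟨s, hs, hr.trans (SimpleGraph.Adj.reachable h)⟩
        exact (SimpleGraph.Adj.reachable
          (show (removeVerts G X').Adj a u from ⟨h.1, hd a ha, hd u hu⟩)).trans (ih hu)
  rintro v ⟨s, hs, hr⟩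
  obtain ⟨p⟩ := hr
  exact ⟨s, hs, key (subset_reach G X S hs) p⟩

lemma exists_minimal_sep {G : SimpleGraph V} {S T : Set V} :
    ∀ (n : ℕ) (X : Set V), X.ncard ≤ n → IsSeparator G S T X →
      ∃ Y ⊆ X, IsMinimalSep G S T Y := by
  intro n
  induction n with
  | zero =>
      intro X hn hsep
      refine ⟨X, subset_rfl, hsep, fun X' hX' hsep' => ?_⟩
      have := Set.ncard_lt_ncard hX' (Set.toFinite X)
      omega
  | succ n ih =>
      intro X hn hsep
      by_cases hmin : ∀ X' ⊂ X, ¬ IsSeparator G S T X'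
      · exact ⟨X, subset_rfl, hsep, hmin⟩
      · push_neg at hmin
        obtain ⟨X', hX', hsep'⟩ := hmin
        have hlt := Set.ncard_lt_ncard hX' (Set.toFinite X)
        obtain ⟨Y, hYX', hY⟩ := ih X' (by omega) hsep'
        exact ⟨Y, hYX'.trans hX'.subset, hY⟩

/-- The reachable set of the farthest minimum `S`–`T` separator is contained
in the reachable set of every important `S`–`T` separator. -/
theorem farthest_minimum_included_in_important
    (G : SimpleGraph V) (S T : Set V)
    (hS : S.Nonempty) (hT : T.Nonempty) (hST : Disjoint S T)
    (hex : ∃ X, IsSeparator G S T X)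
    (Xstar : Set V) (hmin : IsMinimumSep G S T Xstar) (hfar : IsFarthest G S T Xstar) :
    ∀ X, IsImportantSep G S T X → reachSet G Xstar S ⊆ reachSet G X S := by
  intro X hX
  by_contra hcon
  rw [Set.not_subset] at hcon
  obtain ⟨a, haA, haB⟩ := hcon
  set A := reachSet G Xstar S with hA
  set B := reachSet G X S with hB
  have hsepStar := hmin.1
  have hsepX := hX.1.1
  have hNA : nbhd G A ⊆ Xstar := nbhd_reach_subset hsepStar
  have hNB : nbhd G B ⊆ X := nbhd_reach_subset hsepX
  have hTA : Disjoint T A := Set.disjoint_left.mpr fun t ht htA => by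
    obtain ⟨s, hs, hr⟩ := htA; exact hsepStar.2 s hs t ht hr
  have hTB : Disjoint T B := Set.disjoint_left.mpr fun t ht htB => by
    obtain ⟨s, hs, hr⟩ := htB; exact hsepX.2 s hs t ht hr
  have hTXstar : Disjoint T Xstar := (hsepStar.1.mono_right Set.subset_union_right).symm
  have hTX : Disjoint T X := (hsepX.1.mono_right Set.subset_union_right).symm
  set Z := nbhd G (A ∪ B) with hZ
  set W := nbhd G (A ∩ B) with hW
  have hsub1 : Z ∪ W ⊆ nbhd G A ∪ nbhd G B := by
    rintro v (⟨hv, u, hu, hadj⟩ | ⟨hv, u, hu, hadj⟩)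
    · rcases hu with hu | hu
      · exact Or.inl ⟨fun h => hv (Or.inl h), u, hu, hadj⟩
      · exact Or.inr ⟨fun h => hv (Or.inr h), u, hu, hadj⟩
    · by_cases hvA : v ∈ A
      · exact Or.inr ⟨fun h => hv ⟨hvA, h⟩, u, hu.2, hadj⟩
      · exact Or.inl ⟨hvA, u, hu.1, hadj⟩
  have hsub2 : Z ∩ W ⊆ nbhd G A ∩ nbhd G B := by
    rintro v ⟨⟨hv1, -⟩, hv2, u, hu, hadj⟩
    exact ⟨⟨fun h => hv1 (Or.inl h), u, hu.1, hadj⟩, fun h => hv1 (Or.inr h), u, hu.2, hadj⟩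
  have card1 : (Z ∪ W).ncard + (Z ∩ W).ncard = Z.ncard + W.ncard :=
    Set.ncard_union_add_ncard_inter Z W
  have card2 : (nbhd G A ∪ nbhd G B).ncard + (nbhd G A ∩ nbhd G B).ncard
      = (nbhd G A).ncard + (nbhd G B).ncard :=
    Set.ncard_union_add_ncard_inter _ _
  have csub : Z.ncard + W.ncard ≤ Xstar.ncard + X.ncard := by
    have h1 := Set.ncard_le_ncard hsub1 (Set.toFinite _)
    have h2 := Set.ncard_le_ncard hsub2 (Set.toFinite _)
    have h3 := Set.ncard_le_ncard hNA (Set.toFinite _)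
    have h4 := Set.ncard_le_ncard hNB (Set.toFinite _)
    omega
  have hSA : S ⊆ A := subset_reach G Xstar S
  have hSB : S ⊆ B := subset_reach G X S
  have hTZ : Disjoint T Z := Set.disjoint_left.mpr fun t ht htZ => by
    rcases hsub1 (Or.inl htZ) with h | h
    · exact hTXstar.ne_of_mem ht (hNA h) rfl
    · exact hTX.ne_of_mem ht (hNB h) rfl
  have hTW : Disjoint T W := Set.disjoint_left.mpr fun t ht htW => by
    rcases hsub1 (Or.inr htW) with h | h
    · exact hTXstar.ne_of_mem ht (hNA h) rfl
    · exact hTX.ne_of_mem ht (hNB h) rfl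
  have hsepZ : IsSeparator G S T Z :=
    nbhd_isSeparator (A ∪ B) (fun s hs => Or.inl (hSA hs))
      (Set.disjoint_union_right.mpr ⟨hTA, hTB⟩) hTZ
  have hsepW : IsSeparator G S T W :=
    nbhd_isSeparator (A ∩ B) (fun s hs => ⟨hSA hs, hSB hs⟩)
      (hTA.mono_right Set.inter_subset_left) hTW
  have hWmin : Xstar.ncard ≤ W.ncard := hmin.2 W hsepW
  have hAZ : A ⊆ reachSet G Z S :=
    reach_subset_of_avoid (fun v hv hvZ => hvZ.1 (Or.inl hv))
  have hBZ : B ⊆ reachSet G Z S :=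
    reach_subset_of_avoid (fun v hv hvZ => hvZ.1 (Or.inr hv))
  obtain ⟨Y, hYZ, hYmin⟩ := exists_minimal_sep Z.ncard Z le_rfl hsepZ
  have hY1 : Y.ncard ≤ Z.ncard := Set.ncard_le_ncard hYZ (Set.toFinite Z)
  have hreachY : reachSet G Z S ⊆ reachSet G Y S := reach_mono G S hYZ
  have hBY : B ⊂ reachSet G Y S :=
    ⟨fun v hv => hreachY (hBZ hv), fun hsub => haB (hsub (hreachY (hAZ haA)))⟩
  have hlt : X.ncard < Y.ncard := hX.2 Y hYmin hBY
  omega
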